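/- arXiv:math/0602427 — 3 statements merged into one kernel-verified Lean document; each statement's English description precedes it below -/
import Mathlib

section
/- Let f ∈ L²(ℝ;ℂ) and define F : [0,1) → [0,∞] by F(t) := Σ_{k∈ℤ} |f(t+k)|². Then for every finitely supported family (aₙ)_{n∈ℤ} of complex numbers, ∫_ℝ |Σ_{n∈ℤ} aₙ e^{2πint} f(t)|² dt = ∫_0^1 |Σ_{n∈ℤ} aₙ e^{2πint}|² F(t) dt. -/
/-!
The trigonometric polynomial `P t = ∑ aₙ e^{2πint}` is `1`-periodic. Cutting `ℝ` into the
translates `[k, k + 1)` and shifting each back to `[0, 1)` turns `∫_ℝ |P|² |f|²` into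
`∑_k ∫₀¹ |P(t)|² |f(t + k)|² dt`, and monotone convergence exchanges the sum with the integral.
-/

open MeasureTheory Complex

noncomputable section

/-- The periodization `F(t) = ∑_{k ∈ ℤ} |f(t+k)|²`, with values in `[0,∞]`. -/
def periodization (f : ℝ → ℂ) (t : ℝ) : ENNReal :=
  ∑' k : ℤ, (‖f (t + k)‖₊ : ENNReal) ^ 2

open Set Function ENNReal

theorem lintegral_eq_tsum_setLIntegral_Ico_add_intCast (g : ℝ → ℝ≥0∞) :
    ∫⁻ t, g t = ∑' k : ℤ, ∫⁻ t in Ico (0 : ℝ) 1, g (t + k) := by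
  rw [← setLIntegral_univ, ← iUnion_Ico_intCast ℝ,
    lintegral_iUnion (fun _ ↦ measurableSet_Ico) (pairwise_disjoint_Ico_intCast ℝ)]
  refine tsum_congr fun k ↦ ?_
  have hpre : (· + (k : ℝ)) ⁻¹' Ico (k : ℝ) (k + 1) = Ico 0 1 := by
    ext t; simp
  rw [← hpre, (measurePreserving_add_right volume (k : ℝ)).setLIntegral_comp_preimage_emb
    (measurableEmbedding_addRight _)]

theorem Function.Periodic.lintegral_mul_eq_setLIntegral_Ico_mul_tsum {g h : ℝ → ℝ≥0∞}
    (hg_per : Periodic g 1) (hg : AEMeasurable g) (hh : AEMeasurable h) :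
    ∫⁻ t, g t * h t = ∫⁻ t in Ico (0 : ℝ) 1, g t * ∑' k : ℤ, h (t + k) := by
  have hh_shift (k : ℤ) : AEMeasurable (fun t ↦ h (t + k)) :=
    hh.comp_quasiMeasurePreserving (measurePreserving_add_right volume _).quasiMeasurePreserving
  have hg_shift (t : ℝ) (k : ℤ) : g (t + k) = g t := by simpa using hg_per.int_mul k t
  simp_rw [lintegral_eq_tsum_setLIntegral_Ico_add_intCast (fun t ↦ g t * h t), hg_shift,
    ← ENNReal.tsum_mul_left]
  exact (lintegral_tsum fun k ↦ (hg.mul (hh_shift k)).restrict).symm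

theorem periodic_sum_mul_exp_two_pi_mul_I (s : Finset ℤ) (a : ℤ → ℂ) :
    Periodic (fun t : ℝ ↦ ∑ n ∈ s, a n * exp (2 * Real.pi * n * I * t)) 1 := by
  intro t
  refine Finset.sum_congr rfl fun n _ ↦ ?_
  have hexponent : 2 * Real.pi * n * I * ((t + 1 : ℝ) : ℂ)
      = 2 * Real.pi * n * I * t + n * (2 * Real.pi * I) := by
    push_cast; ring
  rw [hexponent, exp_add, exp_int_mul_two_pi_mul_I, mul_one]

/-- For `f ∈ L²(ℝ;ℂ)` and every finitely supported family `(aₙ)_{n∈ℤ}` of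
complex numbers,
`∫_ℝ |∑ₙ aₙ e^{2πint} f(t)|² dt = ∫₀¹ |∑ₙ aₙ e^{2πint}|² F(t) dt`,
where `F(t) = ∑_{k∈ℤ} |f(t+k)|²`. -/
theorem stochastic_datko_pazy_stmt7
    (f : ℝ → ℂ) (hf : MemLp f 2 volume) (s : Finset ℤ) (a : ℤ → ℂ) :
    ∫⁻ t : ℝ, (‖∑ n ∈ s, a n * Complex.exp (2 * Real.pi * n * Complex.I * t) * f t‖₊
        : ENNReal) ^ 2
      = ∫⁻ t in Set.Ico (0 : ℝ) 1,
          ((‖∑ n ∈ s, a n * Complex.exp (2 * Real.pi * n * Complex.I * t)‖₊ : ENNReal) ^ 2)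
            * periodization f t := by
  have hP_sq_periodic : Periodic (fun t : ℝ ↦
      (‖∑ n ∈ s, a n * exp (2 * Real.pi * n * I * t)‖₊ : ℝ≥0∞) ^ 2) 1 :=
    (periodic_sum_mul_exp_two_pi_mul_I s a).comp fun z ↦ (‖z‖₊ : ℝ≥0∞) ^ 2
  have hf_meas : AEMeasurable f := hf.aestronglyMeasurable.aemeasurable
  simp_rw [← Finset.sum_mul, nnnorm_mul, ENNReal.coe_mul, mul_pow]
  exact hP_sq_periodic.lintegral_mul_eq_setLIntegral_Ico_mul_tsum (by fun_prop) (by fun_prop)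

end
end

section
/- Let f ∈ L²(ℝ;ℂ), define fₙ(t) := e^{2πint} f(t) for n ∈ ℤ, and let F(t) := Σ_{k∈ℤ} |f(t+k)|² for t ∈ [0,1). Then for every C > 0 the following are equivalent: (i) ‖Σ_{n∈ℤ} aₙ fₙ‖²_{L²(ℝ)} ≤ C² Σ_{n∈ℤ} |aₙ|² for every finitely supported family (aₙ)_{n∈ℤ} of complex numbers; (ii) ess sup_{t∈(0,1)} F(t) ≤ C². In particular, (fₙ)_{n∈ℤ} is a Hilbert sequence in L²(ℝ) if and only if ess sup_{t∈(0,1)} F(t) < ∞, and the optimal Hilbert constant C_H satisfies C_H² = ess sup_{t∈(0,1)} F(t). -/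
open MeasureTheory Complex

noncomputable section

/-- The modulated functions `fₙ(t) = e^{2πint} f(t)`. -/
def modulated (f : ℝ → ℂ) (n : ℤ) (t : ℝ) : ℂ :=
  Complex.exp (2 * Real.pi * n * Complex.I * t) * f t

/-!
Write `∑ aₙ fₙ = P · f` with the `1`-periodic trigonometric polynomial `P(t) = ∑ aₙ e^{2πint}`.
Folding `ℝ` onto the circle `ℝ/ℤ` turns `‖∑ aₙ fₙ‖²` into `∫_{ℝ/ℤ} |P|² F`, while Parseval gives
`∑ |aₙ|² = ∫_{ℝ/ℤ} |P|²`. So the Hilbert bound says `∫ |P|² F ≤ C² ∫ |P|²` for every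
trigonometric polynomial `P`, which clearly holds if `F ≤ C²` a.e. Conversely, for a measurable
`S`, the Fourier partial sums of `𝟙_S` converge to it a.e. along a subsequence and have coefficient
mass at most `|S|` (Bessel), so Fatou's lemma gives `∫_S F ≤ C² |S|` for every `S`, i.e.
`F ≤ C²` a.e.
-/

open Set Filter Topology AddCircle
open scoped ENNReal

section Circle

variable {T : ℝ}

def trigPoly (s : Finset ℤ) (a : ℤ → ℂ) : C(AddCircle T, ℂ) :=
  ∑ n ∈ s, a n • fourier n

@[simp]
lemma trigPoly_apply (s : Finset ℤ) (a : ℤ → ℂ) (x : AddCircle T) :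
    trigPoly s a x = ∑ n ∈ s, a n * fourier n x := by
  simp [trigPoly]

variable [Fact (0 < T)]

lemma toLp_trigPoly (s : Finset ℤ) (a : ℤ → ℂ) :
    ContinuousMap.toLp (E := ℂ) 2 haarAddCircle ℂ (trigPoly s a : C(AddCircle T, ℂ))
      = ∑ n ∈ s, a n • fourierLp 2 n := by
  simp [trigPoly]

lemma fourierCoeff_trigPoly (s : Finset ℤ) (a : ℤ → ℂ) (i : ℤ) :
    fourierCoeff (trigPoly s a : AddCircle T → ℂ) i = if i ∈ s then a i else 0 := by
  rw [← fourierCoeff_toLp, ← fourierBasis_repr, HilbertBasis.repr_apply_apply, toLp_trigPoly,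
    coe_fourierBasis]
  simp [inner_sum, inner_smul_right, orthonormal_iff_ite.mp orthonormal_fourier]

lemma tsum_enorm_sq_fourierCoeff (u : Lp ℂ 2 (haarAddCircle : Measure (AddCircle T))) :
    ∑' i, ‖fourierCoeff u i‖ₑ ^ 2 = ∫⁻ x, ‖u x‖ₑ ^ 2 ∂haarAddCircle := by
  have hint : Integrable (fun x => ‖u x‖ ^ 2) haarAddCircle :=
    (Lp.memLp u).integrable_norm_pow two_ne_zero
  simp_rw [← ofReal_norm, ← ENNReal.ofReal_pow (norm_nonneg _)]
  rw [← ENNReal.ofReal_tsum_of_nonneg (fun _ => by positivity) (hasSum_sq_fourierCoeff u).summable,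
    tsum_sq_fourierCoeff,
    ofReal_integral_eq_lintegral_ofReal hint (ae_of_all _ fun _ => by positivity)]

lemma lintegral_enorm_trigPoly_sq (s : Finset ℤ) (a : ℤ → ℂ) :
    ∫⁻ x, ‖trigPoly s a x‖ₑ ^ 2 ∂(haarAddCircle : Measure (AddCircle T)) = ∑ n ∈ s, ‖a n‖ₑ ^ 2 := by
  set u := ContinuousMap.toLp (E := ℂ) 2 (haarAddCircle : Measure (AddCircle T)) ℂ (trigPoly s a)
  have hu : u =ᵐ[haarAddCircle] trigPoly s a := ContinuousMap.coeFn_toLp _ _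
  have hcoeff (n : ℤ) : fourierCoeff u n = if n ∈ s then a n else 0 := by
    rw [fourierCoeff_toLp, fourierCoeff_trigPoly]
  calc ∫⁻ x, ‖trigPoly s a x‖ₑ ^ 2 ∂haarAddCircle = ∫⁻ x, ‖u x‖ₑ ^ 2 ∂haarAddCircle :=
        lintegral_congr_ae (hu.mono fun _ hx => by simp only [hx])
    _ = ∑' n, ‖fourierCoeff u n‖ₑ ^ 2 := (tsum_enorm_sq_fourierCoeff u).symm
    _ = ∑ n ∈ s, ‖a n‖ₑ ^ 2 := by
        rw [tsum_eq_sum (s := s) fun n hn => by simp [hcoeff, hn]]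
        exact Finset.sum_congr rfl fun n hn => by simp [hcoeff, hn]

lemma exists_trigPoly_tendsto_indicator {S : Set (AddCircle T)} (hS : MeasurableSet S) :
    ∃ (s : ℕ → Finset ℤ) (a : ℤ → ℂ), (∀ k, ∑ n ∈ s k, ‖a n‖ₑ ^ 2 ≤ haarAddCircle S) ∧
      ∀ᵐ x ∂haarAddCircle, Tendsto (fun k => trigPoly (s k) a x) atTop (𝓝 (S.indicator 1 x)) := by
  set g := indicatorConstLp 2 hS (measure_ne_top haarAddCircle S) (1 : ℂ)
  have hg : g =ᵐ[haarAddCircle] S.indicator 1 := indicatorConstLp_coeFn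
  have hnorm : ∑' n, ‖fourierCoeff g n‖ₑ ^ 2 = haarAddCircle S := by
    rw [tsum_enorm_sq_fourierCoeff, ← lintegral_indicator_one hS]
    refine lintegral_congr_ae (hg.mono fun x hx => ?_)
    by_cases hxS : x ∈ S <;> simp [hx, hxS]
  have hpartial (s : Finset ℤ) :
      ⇑(∑ n ∈ s, fourierCoeff g n • fourierLp (T := T) 2 n) =ᵐ[haarAddCircle]
        trigPoly s (fourierCoeff g) := by
    rw [← toLp_trigPoly]
    exact ContinuousMap.coeFn_toLp _ _
  obtain ⟨s, -, hae⟩ :=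
    (tendstoInMeasure_of_tendsto_Lp (hasSum_fourier_series_L2 g)).exists_seq_tendsto_ae'
  refine ⟨s, fourierCoeff g, fun k => hnorm ▸ ENNReal.sum_le_tsum _, ?_⟩
  filter_upwards [hae, hg, ae_all_iff.2 fun k => hpartial (s k)] with x hx hgx hPx
  rw [← hgx]
  exact hx.congr fun k => hPx k

lemma setLIntegral_le_of_lintegral_trigPoly_mul_le {w : AddCircle T → ℝ≥0∞}
    (hw : AEMeasurable w haarAddCircle) {c : ℝ≥0∞}
    (h : ∀ s a, ∫⁻ x, ‖trigPoly s a x‖ₑ ^ 2 * w x ∂haarAddCircle ≤ c * ∑ n ∈ s, ‖a n‖ₑ ^ 2)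
    {S : Set (AddCircle T)} (hS : MeasurableSet S) :
    ∫⁻ x in S, w x ∂haarAddCircle ≤ c * haarAddCircle S := by
  obtain ⟨s, a, hs, hae⟩ := exists_trigPoly_tendsto_indicator hS
  have hpointwise : ∀ᵐ x ∂haarAddCircle, S.indicator w x
      ≤ liminf (fun k => ‖trigPoly (s k) a x‖ₑ ^ 2 * w x) atTop := by
    filter_upwards [hae] with x hx
    have hlim :
        Tendsto (fun k => ‖trigPoly (s k) a x‖ₑ ^ 2) atTop (𝓝 (‖S.indicator 1 x‖ₑ ^ 2)) :=
      ENNReal.Tendsto.pow ((continuous_enorm.tendsto _).comp hx)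
    calc S.indicator w x = ‖S.indicator (1 : AddCircle T → ℂ) x‖ₑ ^ 2 * w x := by
          by_cases hxS : x ∈ S <;> simp [hxS]
      _ = liminf (fun k => ‖trigPoly (s k) a x‖ₑ ^ 2) atTop * liminf (fun _ => w x) atTop := by
          rw [hlim.liminf_eq, liminf_const]
      _ ≤ _ := ENNReal.le_liminf_mul
  calc ∫⁻ x in S, w x ∂haarAddCircle = ∫⁻ x, S.indicator w x ∂haarAddCircle :=
        (lintegral_indicator hS w).symm
    _ ≤ ∫⁻ x, liminf (fun k => ‖trigPoly (s k) a x‖ₑ ^ 2 * w x) atTop ∂haarAddCircle :=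
        lintegral_mono_ae hpointwise
    _ ≤ liminf (fun k => ∫⁻ x, ‖trigPoly (s k) a x‖ₑ ^ 2 * w x ∂haarAddCircle) atTop :=
        lintegral_liminf_le' fun k =>
          ((trigPoly (s k) a).continuous.measurable.enorm.pow_const 2).aemeasurable.mul hw
    _ ≤ c * haarAddCircle S :=
        liminf_le_of_frequently_le' (Frequently.of_forall fun k =>
          (h (s k) a).trans (by gcongr; exact hs k))

theorem lintegral_trigPoly_mul_le_iff_essSup_le {w : AddCircle T → ℝ≥0∞}
    (hw : AEMeasurable w haarAddCircle) (c : ℝ≥0∞) :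
    (∀ s a, ∫⁻ x, ‖trigPoly s a x‖ₑ ^ 2 * w x ∂haarAddCircle ≤ c * ∑ n ∈ s, ‖a n‖ₑ ^ 2) ↔
      essSup w haarAddCircle ≤ c := by
  refine ⟨fun h => essSup_le_of_ae_le c ?_, fun hc s a => ?_⟩
  · refine ae_le_of_forall_setLIntegral_le_of_sigmaFinite₀ hw fun S hS _ => ?_
    rw [setLIntegral_const]
    exact setLIntegral_le_of_lintegral_trigPoly_mul_le hw h hS
  · calc ∫⁻ x, ‖trigPoly s a x‖ₑ ^ 2 * w x ∂haarAddCircle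
        ≤ ∫⁻ x, ‖trigPoly s a x‖ₑ ^ 2 * c ∂haarAddCircle :=
          lintegral_mono_ae ((ae_le_essSup (f := w)).mono fun x hx => by gcongr; exact hx.trans hc)
      _ = c * ∑ n ∈ s, ‖a n‖ₑ ^ 2 := by
          rw [lintegral_mul_const _ ((trigPoly s a).continuous.measurable.enorm.pow_const 2),
            lintegral_enorm_trigPoly_sq, mul_comm]

end Circle

lemma lintegral_eq_setLIntegral_Ioc_tsum {h : ℝ → ℝ≥0∞} (hh : AEMeasurable h) :
    ∫⁻ t, h t = ∫⁻ t in Ioc 0 1, ∑' k : ℤ, h (t + k) := by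
  let ι : ℤ → AddSubgroup.zmultiples (1 : ℝ) := fun k => ⟨k, k, by simp⟩
  have hι : Function.Bijective ι :=
    ⟨fun _ _ hkl => Int.cast_injective (congrArg Subtype.val hkl),
      fun ⟨_, k, hk⟩ => ⟨k, by simp [ι, ← hk]⟩⟩
  have hfd := isAddFundamentalDomain_Ioc one_pos 0 (volume : Measure ℝ)
  rw [zero_add] at hfd
  rw [hfd.lintegral_eq_tsum'', ← (Equiv.ofBijective ι hι).tsum_eq, lintegral_tsum]
  · simp only [AddSubgroup.vadd_def, vadd_eq_add, add_comm]
    rfl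
  · exact fun k => (hh.comp_quasiMeasurePreserving
      (measurePreserving_add_right volume (k : ℝ)).quasiMeasurePreserving).restrict

lemma periodization_periodic (f : ℝ → ℂ) : Function.Periodic (periodization f) 1 := by
  intro t
  rw [periodization, periodization, ← (Equiv.subRight (1 : ℤ)).tsum_eq]
  simp [add_assoc]

lemma aemeasurable_periodization {f : ℝ → ℂ} (hf : AEStronglyMeasurable f) :
    AEMeasurable (periodization f) :=
  AEMeasurable.tsum fun k => (hf.enorm.pow_const 2).comp_quasiMeasurePreserving
    (measurePreserving_add_right volume (k : ℝ)).quasiMeasurePreserving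

def circlePeriodization (f : ℝ → ℂ) : AddCircle (1 : ℝ) → ℝ≥0∞ :=
  (periodization_periodic f).lift

lemma circlePeriodization_coe (f : ℝ → ℂ) (t : ℝ) :
    circlePeriodization f t = periodization f t :=
  (periodization_periodic f).lift_coe t

lemma haarAddCircle_eq_volume : (haarAddCircle : Measure (AddCircle (1 : ℝ))) = volume := by
  rw [volume_eq_smul_haarAddCircle, ENNReal.ofReal_one, one_smul]

lemma measurePreserving_coe_Ioc :
    MeasurePreserving ((↑) : ℝ → AddCircle (1 : ℝ)) (volume.restrict (Ioc 0 1)) haarAddCircle := by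
  simpa [haarAddCircle_eq_volume] using AddCircle.measurePreserving_mk (1 : ℝ) 0

lemma aemeasurable_circlePeriodization {f : ℝ → ℂ} (hf : AEStronglyMeasurable f) :
    AEMeasurable (circlePeriodization f) haarAddCircle := by
  have hcomp : circlePeriodization f = periodization f ∘ Subtype.val ∘ equivIoc 1 0 := by
    ext x
    conv_lhs => rw [← coe_equivIoc (a := 0) (y := x)]
    exact circlePeriodization_coe f _
  rw [hcomp, haarAddCircle_eq_volume]
  have hIoc : AEMeasurable (periodization f) (volume.restrict (Ioc 0 (0 + 1))) :=
    (aemeasurable_periodization hf).restrict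
  exact (hIoc.comp_quasiMeasurePreserving
    (measurePreserving_subtype_coe measurableSet_Ioc).quasiMeasurePreserving
    ).comp_quasiMeasurePreserving (measurePreserving_equivIoc 1).quasiMeasurePreserving

lemma modulated_eq_fourier_mul (f : ℝ → ℂ) (n : ℤ) (t : ℝ) :
    modulated f n t = fourier n (t : AddCircle (1 : ℝ)) * f t := by
  rw [modulated, fourier_coe_apply]
  push_cast
  ring_nf

lemma lintegral_sum_modulated_eq {f : ℝ → ℂ} (hf : AEStronglyMeasurable f) (s : Finset ℤ)
    (a : ℤ → ℂ) :
    ∫⁻ t, ‖∑ n ∈ s, a n * modulated f n t‖ₑ ^ 2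
      = ∫⁻ x, ‖trigPoly s a x‖ₑ ^ 2 * circlePeriodization f x ∂haarAddCircle := by
  have hP : Measurable fun t : ℝ => ‖trigPoly s a (t : AddCircle (1 : ℝ))‖ₑ ^ 2 :=
    ((trigPoly s a).continuous.comp (AddCircle.continuous_mk' 1)).measurable.enorm.pow_const 2
  calc ∫⁻ t, ‖∑ n ∈ s, a n * modulated f n t‖ₑ ^ 2
      = ∫⁻ t : ℝ, ‖trigPoly s a (t : AddCircle (1 : ℝ))‖ₑ ^ 2 * ‖f t‖ₑ ^ 2 := by
        simp_rw [modulated_eq_fourier_mul, ← mul_assoc, ← Finset.sum_mul, enorm_mul, mul_pow,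
          trigPoly_apply]
    _ = ∫⁻ t in Ioc (0 : ℝ) 1,
          ∑' k : ℤ, ‖trigPoly s a (t : AddCircle (1 : ℝ))‖ₑ ^ 2 * ‖f (t + k)‖ₑ ^ 2 := by
        refine (lintegral_eq_setLIntegral_Ioc_tsum
          (hP.aemeasurable.mul (hf.enorm.pow_const 2))).trans ?_
        simp only [Pi.mul_apply, AddSubgroup.intCast_mem_zmultiples_one,
          QuotientAddGroup.mk_add_of_mem]
    _ = ∫⁻ t in Ioc (0 : ℝ) 1,
          ‖trigPoly s a (t : AddCircle (1 : ℝ))‖ₑ ^ 2 * circlePeriodization f t := by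
        simp_rw [ENNReal.tsum_mul_left, circlePeriodization_coe, periodization]
        rfl
    _ = ∫⁻ x, ‖trigPoly s a x‖ₑ ^ 2 * circlePeriodization f x ∂haarAddCircle := by
        simpa [haarAddCircle_eq_volume] using
          AddCircle.lintegral_preimage 1 0 fun x => ‖trigPoly s a x‖ₑ ^ 2 * circlePeriodization f x

lemma essSup_periodization_eq {f : ℝ → ℂ} (hf : AEStronglyMeasurable f) :
    essSup (periodization f) (volume.restrict (Ioo 0 1))
      = essSup (circlePeriodization f) haarAddCircle := by
  rw [Measure.restrict_congr_set Ioo_ae_eq_Ioc, ← measurePreserving_coe_Ioc.map_eq,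
    essSup_map_measure (by rw [measurePreserving_coe_Ioc.map_eq]; exact
      aemeasurable_circlePeriodization hf) measurePreserving_coe_Ioc.measurable.aemeasurable]
  rfl

lemma exists_pos_le_ofReal_sq {x : ℝ≥0∞} (hx : x ≠ ⊤) :
    ∃ C : ℝ, 0 < C ∧ x ≤ ENNReal.ofReal (C ^ 2) :=
  ⟨x.toReal + 1, by positivity, (ENNReal.ofReal_toReal hx).symm.le.trans
    (ENNReal.ofReal_le_ofReal (by nlinarith [ENNReal.toReal_nonneg (a := x)]))⟩

/-- For `f ∈ L²(ℝ;ℂ)`, `fₙ(t) = e^{2πint} f(t)` and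
`F(t) = ∑_{k∈ℤ} |f(t+k)|²`: for every `C > 0`, the upper bound
`‖∑ₙ aₙ fₙ‖²_{L²(ℝ)} ≤ C² ∑ₙ |aₙ|²` holds for all finitely supported `(aₙ)` if and only if
`ess sup_{t ∈ (0,1)} F(t) ≤ C²`. In particular, `(fₙ)` is a Hilbert sequence in `L²(ℝ)`
iff `ess sup F < ∞` (and the optimal Hilbert constant `C_H` satisfies `C_H² = ess sup F`). -/
theorem stochastic_datko_pazy_stmt9
    (f : ℝ → ℂ) (hf : MemLp f 2 volume) :
    (∀ C : ℝ, 0 < C →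
      ((∀ (s : Finset ℤ) (a : ℤ → ℂ),
          ∫⁻ t : ℝ, (‖∑ n ∈ s, a n * modulated f n t‖₊ : ENNReal) ^ 2
            ≤ ENNReal.ofReal (C ^ 2) * ∑ n ∈ s, (‖a n‖₊ : ENNReal) ^ 2) ↔
        essSup (periodization f) (volume.restrict (Set.Ioo (0 : ℝ) 1))
          ≤ ENNReal.ofReal (C ^ 2))) ∧
    ((∃ C : ℝ, 0 < C ∧ ∀ (s : Finset ℤ) (a : ℤ → ℂ),
        ∫⁻ t : ℝ, (‖∑ n ∈ s, a n * modulated f n t‖₊ : ENNReal) ^ 2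
          ≤ ENNReal.ofReal (C ^ 2) * ∑ n ∈ s, (‖a n‖₊ : ENNReal) ^ 2) ↔
      essSup (periodization f) (volume.restrict (Set.Ioo (0 : ℝ) 1)) < ⊤) := by
  have key : ∀ c : ℝ≥0∞, (∀ (s : Finset ℤ) (a : ℤ → ℂ),
      ∫⁻ t : ℝ, (‖∑ n ∈ s, a n * modulated f n t‖₊ : ENNReal) ^ 2
        ≤ c * ∑ n ∈ s, (‖a n‖₊ : ENNReal) ^ 2) ↔
      essSup (periodization f) (volume.restrict (Set.Ioo (0 : ℝ) 1)) ≤ c := fun c => by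
    simp_rw [← enorm_eq_nnnorm, lintegral_sum_modulated_eq hf.1, essSup_periodization_eq hf.1]
    exact lintegral_trigPoly_mul_le_iff_essSup_le (aemeasurable_circlePeriodization hf.1) c
  refine ⟨fun C _ => key _, fun ⟨C, _, hC⟩ => ((key _).1 hC).trans_lt ENNReal.ofReal_lt_top,
    fun hM => ?_⟩
  obtain ⟨C, hC, hMC⟩ := exists_pos_le_ofReal_sq hM.ne
  exact ⟨C, hC, (key _).2 hMC⟩

end
end

section
/- Let 𝒜 be a complex unital Banach algebra, a ∈ 𝒜, and c > 0. Assume that for every λ ∈ ℂ with Re λ > 0, the element λ·1 - a is invertible in 𝒜 and ‖(λ·1 - a)^{-1}‖ ≤ c / √(Re λ). Then every μ in the spectrum of a satisfies Re μ ≤ -1/(4c²). -/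
/-!
If `λ - a` has inverse `b` and `‖(λ - μ) b‖ < 1`, then `μ - a = (λ - a)(1 - (λ - μ) b)` is
invertible by a Neumann series. Hence every `μ ∈ σ(a)` satisfies `1 ≤ |λ - μ| ‖(λ - a)⁻¹‖`, and
the resolvent bound turns this into `√(Re λ) ≤ c |λ - μ|` for `Re λ > 0`. Taking
`λ = t + i Im μ` gives `√t ≤ c |t - Re μ|` for all `t > 0`; `t = Re μ` forces `Re μ ≤ 0`, and
the optimal choice `t = 1/(4c²)` gives `Re μ ≤ -1/(4c²)`.
-/

theorem spectrum.one_le_norm_sub_mul_norm_of_inverse {𝕜 A : Type*} [NormedField 𝕜] [NormedRing A]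
    [NormedAlgebra 𝕜 A] [CompleteSpace A] {a b : A} {lam mu : 𝕜}
    (hb : (algebraMap 𝕜 A lam - a) * b = 1) (hb' : b * (algebraMap 𝕜 A lam - a) = 1)
    (hmu : mu ∈ spectrum 𝕜 a) : 1 ≤ ‖lam - mu‖ * ‖b‖ := by
  by_contra! hlt
  have hsmall : ‖(lam - mu) • b‖ < 1 := by rwa [norm_smul]
  have hfactor : (algebraMap 𝕜 A lam - a) * (1 - (lam - mu) • b) = algebraMap 𝕜 A mu - a := by
    rw [mul_sub, mul_one, mul_smul_comm, hb, Algebra.algebraMap_eq_smul_one,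
      Algebra.algebraMap_eq_smul_one, sub_smul]
    abel
  rw [spectrum.mem_iff, ← hfactor] at hmu
  exact hmu ((Units.mk _ b hb hb').isUnit.mul (Units.oneSub _ hsmall).isUnit)

theorem le_neg_inv_four_mul_sq_of_forall_sqrt_le {x c : ℝ} (hc : 0 < c)
    (h : ∀ t, 0 < t → √t ≤ c * |t - x|) : x ≤ -(1 / (4 * c ^ 2)) := by
  have hx : x ≤ 0 := by
    by_contra! hx
    exact (Real.sqrt_pos.2 hx).not_ge (by simpa using h x hx)
  set t := 1 / (4 * c ^ 2) with ht
  have ht0 : 0 < t := by positivity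
  have hct : c ^ 2 * t = 1 / 4 := by
    rw [ht]
    field_simp
  have hsqrt : √t = 1 / (2 * c) := by
    rw [Real.sqrt_eq_iff_mul_self_eq_of_pos (by positivity)]
    field_simp
    linarith
  have key := h t ht0
  rw [hsqrt, abs_of_nonneg (by linarith), div_le_iff₀ (by positivity)] at key
  rw [ht, ← neg_div, le_div_iff₀ (by positivity)]
  nlinarith

/-- Let `𝒜` be a complex unital Banach algebra, `a ∈ 𝒜` and `c > 0`.
If for every `λ ∈ ℂ` with `Re λ > 0` the element `λ·1 - a` is invertible with
`‖(λ·1 - a)⁻¹‖ ≤ c / √(Re λ)`, then every `μ` in the spectrum of `a` satisfies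
`Re μ ≤ -1/(4c²)`. -/
theorem stochastic_datko_pazy_stmt16
    {𝒜 : Type*} [NormedRing 𝒜] [NormedAlgebra ℂ 𝒜] [CompleteSpace 𝒜]
    (a : 𝒜) (c : ℝ) (hc : 0 < c)
    (hinv : ∀ lam : ℂ, 0 < lam.re → ∃ b : 𝒜,
      (algebraMap ℂ 𝒜 lam - a) * b = 1 ∧ b * (algebraMap ℂ 𝒜 lam - a) = 1 ∧
        ‖b‖ ≤ c / Real.sqrt lam.re) :
    ∀ mu ∈ spectrum ℂ a, mu.re ≤ -(1 / (4 * c ^ 2)) := by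
  intro mu hmu
  refine le_neg_inv_four_mul_sq_of_forall_sqrt_le hc fun t ht ↦ ?_
  obtain ⟨b, hb, hb', hbound⟩ := hinv ⟨t, mu.im⟩ ht
  have hdiff : (⟨t, mu.im⟩ : ℂ) - mu = ((t - mu.re : ℝ) : ℂ) := Complex.ext (by simp) (by simp)
  have key := spectrum.one_le_norm_sub_mul_norm_of_inverse hb hb' hmu
  rw [hdiff, Complex.norm_real, Real.norm_eq_abs] at key
  have hsqrt : 0 < √t := Real.sqrt_pos.2 ht
  calc √t ≤ √t * (|t - mu.re| * ‖b‖) := le_mul_of_one_le_right hsqrt.le key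
    _ ≤ √t * (|t - mu.re| * (c / √t)) := by gcongr
    _ = c * |t - mu.re| := by field_simp
end
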